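/- Let C, n ≥ 1 with C ≥ 2 and let d_0, ..., d_{m-1} be positive natural numbers with C * n = ∏_i d_i. Then there exist an index i and natural numbers a, b with a ≥ 1, b ≥ 1, a + b = d_i, such that n divides a * ∏_{j ≠ i} d_j and n divides b * ∏_{j ≠ i} d_j. In other words, the grid can always be split along some dimension into two nonempty subgrids each of size a multiple of n. -/

import Mathlib

/-!
Write `P i = ∏_{j ≠ i} d j`. Since `d i * P i = C * n`, cutting dimension `i` at `a` leaves
`n ∣ a * P i` as soon as `d i ∣ a * C`. As `C ≥ 2` divides `∏ d i`, some `d i` shares a factor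
`g > 1` with `C`, and the cut `a = d i / g` satisfies both `d i ∣ a * C` and `d i ∣ (d i - a) * C`.
-/

theorem Nat.exists_not_coprime_of_dvd_prod {ι : Type*} {s : Finset ι} {f : ι → ℕ} {c : ℕ}
    (hc : c ≠ 1) (h : c ∣ ∏ i ∈ s, f i) : ∃ i ∈ s, ¬ (f i).Coprime c := by
  by_contra! hcop
  exact hc ((Nat.Coprime.prod_left hcop).symm.eq_one_of_dvd h)

theorem Nat.exists_add_eq_dvd_mul_of_not_coprime {d c : ℕ} (hd : 0 < d) (h : ¬ d.Coprime c) :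
    ∃ a b, 0 < a ∧ 0 < b ∧ a + b = d ∧ d ∣ a * c ∧ d ∣ b * c := by
  set g := d.gcd c
  have hg : 1 < g := by
    have : 0 < g := Nat.gcd_pos_of_pos_left c hd
    unfold Nat.Coprime at h
    omega
  have ha_pos : 0 < d / g := Nat.div_pos (Nat.le_of_dvd hd (Nat.gcd_dvd_left d c)) (by omega)
  have ha_lt : d / g < d := Nat.div_lt_self hd hg
  have ha : d ∣ d / g * c := by
    refine ⟨c / g, ?_⟩
    rw [← Nat.div_mul_cancel (Nat.gcd_dvd_left d c), mul_assoc,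
      Nat.mul_div_cancel' (Nat.gcd_dvd_right d c), Nat.div_mul_cancel (Nat.gcd_dvd_left d c)]
  refine ⟨d / g, d - d / g, ha_pos, by omega, by omega, ha, ?_⟩
  rw [Nat.sub_mul]
  exact Nat.dvd_sub (dvd_mul_right d c) ha

theorem dvd_mul_prod_erase_of_dvd_mul {ι M : Type*} [CommMonoidWithZero M] [IsCancelMulZero M]
    [DecidableEq ι] {s : Finset ι} {d : ι → M} {c n a : M} {i : ι} (hi : i ∈ s) (hdi : d i ≠ 0)
    (hprod : c * n = ∏ j ∈ s, d j) (h : d i ∣ a * c) : n ∣ a * ∏ j ∈ s.erase i, d j := by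
  obtain ⟨t, ht⟩ := h
  refine ⟨t, mul_left_cancel₀ hdi ?_⟩
  calc d i * (a * ∏ j ∈ s.erase i, d j) = a * c * n := by
        rw [mul_left_comm, Finset.mul_prod_erase s d hi, ← hprod, mul_assoc]
    _ = d i * (n * t) := by rw [ht]; ac_rfl

theorem hyperplane_split_exists_general
    (C n m : ℕ) (d : Fin m → ℕ)
    (hC : 2 ≤ C)
    (hd : ∀ i, 0 < d i)
    (hprod : C * n = ∏ i, d i) :
    ∃ (i : Fin m) (a b : ℕ), 1 ≤ a ∧ 1 ≤ b ∧ a + b = d i ∧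
      n ∣ a * ∏ j ∈ Finset.univ.erase i, d j ∧
      n ∣ b * ∏ j ∈ Finset.univ.erase i, d j := by
  obtain ⟨i, -, hi⟩ := Nat.exists_not_coprime_of_dvd_prod (by omega) (Dvd.intro n hprod)
  obtain ⟨a, b, ha, hb, hab, hda, hdb⟩ := Nat.exists_add_eq_dvd_mul_of_not_coprime (hd i) hi
  have hdi : d i ≠ 0 := (hd i).ne'
  exact ⟨i, a, b, ha, hb, hab, dvd_mul_prod_erase_of_dvd_mul (Finset.mem_univ i) hdi hprod hda,
    dvd_mul_prod_erase_of_dvd_mul (Finset.mem_univ i) hdi hprod hdb⟩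

theorem hyperplane_split_exists
    (C n m : ℕ) (d : Fin m → ℕ)
    (hC : 2 ≤ C) (hn : 1 ≤ n)
    (hd : ∀ i, 0 < d i)
    (hprod : C * n = ∏ i, d i) :
    ∃ (i : Fin m) (a b : ℕ), 1 ≤ a ∧ 1 ≤ b ∧ a + b = d i ∧
      n ∣ a * ∏ j ∈ Finset.univ.erase i, d j ∧
      n ∣ b * ∏ j ∈ Finset.univ.erase i, d j :=
  hyperplane_split_exists_general C n m d hC hd hprod
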